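/- Ex Falso fails in CC/TT while Intermediate holds: for all formulas A, B and valuations v, if v(A) ≥ 1/2 then v(¬A →cc B) ≥ 1/2 (Intermediate); but there exist an atom A, formula B, and valuation v with v(¬(A →cc B)) ≥ 1/2 and v(A) = 0 (failure of Ex Falso), e.g. v(A) = 0. -/
import Mathlib

/-- Trivalent truth values: 0, 1/2, 1. -/
inductive V : Type
  | zero
  | half
  | one
deriving DecidableEq, Repr

open V

/-- Strong Kleene negation. -/
def vneg : V → V
  | zero => one
  | half => half
  | one => zero

/-- Strong Kleene conjunction (minimum). -/
def vmin : V → V → V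
  | one, b => b
  | half, one => half
  | half, half => half
  | half, zero => zero
  | zero, _ => zero

/-- Strong Kleene disjunction (maximum). -/
def vmax : V → V → V
  | zero, b => b
  | half, zero => half
  | half, half => half
  | half, one => one
  | one, _ => one

/-- de Finetti conditional. -/
def df : V → V → V
  | one, c => c
  | _, _ => half

/-- Cooper–Cantwell conditional. -/
def cc : V → V → V
  | zero, _ => half
  | _, c => c

/-- Cooper's quasi-conjunction. -/
def qand : V → V → V
  | zero, _ => zero
  | _, zero => zero
  | one, _ => one
  | _, one => one
  | half, half => half

/-- Cooper's quasi-disjunction. -/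
def qor : V → V → V
  | one, _ => one
  | _, one => one
  | zero, _ => zero
  | _, zero => zero
  | half, half => half

/-- "value ≥ 1/2", i.e. designated / tolerantly true. -/
def des (x : V) : Prop := x ≠ V.zero

/-- Formulas with negation, conjunction, disjunction and the Cooper–Cantwell
indicative conditional. -/
inductive Form : Type
  | atom : ℕ → Form
  | neg : Form → Form
  | and : Form → Form → Form
  | or : Form → Form → Form
  | cond : Form → Form → Form
deriving DecidableEq

/-- Trivalent CC valuation of formulas, extending a valuation of atoms. -/
def val (v : ℕ → V) : Form → V
  | .atom n => v n
  | .neg A => vneg (val v A)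
  | .and A B => vmin (val v A) (val v B)
  | .or A B => vmax (val v A) (val v B)
  | .cond A B => cc (val v A) (val v B)

/-- The Strong Kleene material conditional A ⊃ B := ¬(A ∧ ¬B). -/
def mat (A B : Form) : Form := Form.neg (Form.and A (Form.neg B))

/-- Intermediate holds in CC/TT for formulas taking a classical value, while
Ex Falso fails. -/
theorem cc_intermediate_exfalso_fails :
    (∀ (A B : Form) (v : ℕ → V),
      (val v A = V.zero ∨ val v A = V.one) →
      des (val v A) →
      des (val v (Form.cond (Form.neg A) B))) ∧
    (∃ (p : ℕ) (B : Form) (v : ℕ → V),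
      des (val v (Form.neg (Form.cond (Form.atom p) B))) ∧
      val v (Form.atom p) = V.zero) := by
  constructor
  · intro A B v hcl hdes
    rcases hcl with h | h
    · exact absurd h hdes
    · simp [val, h, vneg, cc, des]
  · exact ⟨0, Form.atom 0, fun _ => V.zero, by simp [val, cc, vneg, des], rfl⟩
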